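/- arXiv:math/0601429 — 2 statements merged into one kernel-verified Lean document; each statement's English description precedes it below -/
import Mathlib

section
/- Under (H1) with 0<a<1/d, the function ψ(u) = ∫_{[0,1]×ℝ^d} s^{-ad}(exp(s^{ad}·u·K(z)/(1−ad)) − 1) ds dz is well defined (the integral converges absolutely for every u∈ℝ), is strictly convex and twice continuously differentiable on ℝ, and its Fenchel–Legendre transform I(t) = sup_{u∈ℝ}{ut − ψ(u)} is a good rate function on ℝ, i.e. I takes values in [0,∞] and has compact level sets. -/
open MeasureTheory Filter Set
open scoped Topology ENNReal NNReal BigOperators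

/-- `ψ(u) = ∫_{[0,1]×ℝ^d} s^{-ad} (exp(s^{ad} u K(z)/(1-ad)) - 1) ds dz`. -/
noncomputable def psi (d : ℕ) (a : ℝ) (K : (Fin d → ℝ) → ℝ) (u : ℝ) : ℝ :=
  ∫ s in Ioc (0:ℝ) 1, ∫ z : Fin d → ℝ,
    s ^ (-(a * d)) * (Real.exp (s ^ (a * d) * u * K z / (1 - a * d)) - 1)

/-- The Fenchel–Legendre transform `I(t) = sup_u (u t - ψ(u))`, as an extended real. -/
noncomputable def Itrans (d : ℕ) (a : ℝ) (K : (Fin d → ℝ) → ℝ) (t : ℝ) : EReal :=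
  ⨆ u : ℝ, ((u * t - psi d a K u : ℝ) : EReal)

/-!
Put `w = s ^ (a d) ∈ (0, 1]` and `k = K / (1 - a d)`. The integrand is then `(exp (w u k) - 1) / w`,
with `u`-derivatives `k exp (w u k)` and `w k² exp (w u k)`; for `|u| ≤ R` all three are bounded by
`C_R |k|`, which is integrable because `K` is bounded and integrable. So `ψ` can be differentiated
twice under the integral sign, and `ψ'' = ∫ w k² exp (w u k)` is positive since `∫ K = 1` forces
`K ≠ 0` on a set of positive measure. The transform is nonnegative because `ψ 0 = 0`, and a sublevel
set `{I ≤ c}` is an intersection of closed half-lines, bounded by testing `u = 1` and `u = -1`.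
-/

theorem Real.abs_exp_sub_one_le_abs_mul_exp_abs (x : ℝ) :
    |Real.exp x - 1| ≤ |x| * Real.exp |x| := by
  rcases le_or_gt 0 x with hx | hx
  · rw [abs_of_nonneg hx, abs_of_nonneg (sub_nonneg.2 (Real.one_le_exp hx))]
    nlinarith [Real.add_one_le_exp (-x), Real.exp_neg x, Real.exp_pos x,
      mul_inv_cancel₀ (Real.exp_ne_zero x)]
  · rw [abs_of_neg hx, abs_of_nonpos (sub_nonpos.2 (Real.exp_le_one_iff.2 hx.le))]
    nlinarith [Real.add_one_le_exp x, Real.one_le_exp (neg_nonneg.2 hx.le)]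

noncomputable def legendreTransform (f : ℝ → ℝ) (t : ℝ) : EReal :=
  ⨆ u : ℝ, ((u * t - f u : ℝ) : EReal)

theorem legendreTransform_nonneg {f : ℝ → ℝ} (hf : f 0 = 0) (t : ℝ) :
    0 ≤ legendreTransform f t :=
  le_iSup_of_le 0 (by simp [hf])

theorem legendreTransform_le_coe_iff (f : ℝ → ℝ) (t c : ℝ) :
    legendreTransform f t ≤ c ↔ ∀ u, u * t - f u ≤ c := by
  simp only [legendreTransform, iSup_le_iff, EReal.coe_le_coe_iff]

theorem isCompact_legendreTransform_sublevel (f : ℝ → ℝ) (c : ℝ) :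
    IsCompact {t | legendreTransform f t ≤ c} := by
  simp only [legendreTransform_le_coe_iff, ofPred_forall]
  refine isCompact_Icc.of_isClosed_subset
    (isClosed_iInter fun u => isClosed_le (by fun_prop) continuous_const)
    (s := Icc (-(c + f (-1))) (c + f 1)) fun t ht => ?_
  have h₁ := mem_iInter.1 ht 1
  have h₂ := mem_iInter.1 ht (-1)
  simp only [mem_ofPred_eq] at h₁ h₂
  constructor <;> linarith

theorem contDiff_two_of_hasDerivAt {f f' f'' : ℝ → ℝ} (hf : ∀ x, HasDerivAt f (f' x) x)
    (hf' : ∀ x, HasDerivAt f' (f'' x) x) (hf'' : Continuous f'') : ContDiff ℝ 2 f := by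
  have hd : deriv f = f' := funext fun x => (hf x).deriv
  have hd' : deriv f' = f'' := funext fun x => (hf' x).deriv
  rw [show (2 : WithTop ℕ∞) = 1 + 1 from rfl, contDiff_succ_iff_deriv, hd,
    contDiff_one_iff_deriv, hd']
  exact ⟨fun x => (hf x).differentiableAt, by simp, fun x => (hf' x).differentiableAt, hf''⟩

theorem strictConvexOn_univ_of_hasDerivAt_of_pos {f f' f'' : ℝ → ℝ}
    (hf : ∀ x, HasDerivAt f (f' x) x) (hf' : ∀ x, HasDerivAt f' (f'' x) x)
    (hpos : ∀ x, 0 < f'' x) : StrictConvexOn ℝ univ f := by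
  have hd : deriv f = f' := funext fun x => (hf x).deriv
  refine strictConvexOn_univ_of_deriv2_pos
    (continuous_iff_continuousAt.2 fun x => (hf x).continuousAt) fun x => ?_
  rw [Function.iterate_succ_apply, Function.iterate_one, hd, (hf' x).deriv]
  exact hpos x

section LocallyDominated

variable {α : Type*} [MeasurableSpace α] {μ : Measure α}

def LocallyDominated (F : ℝ → α → ℝ) (g : α → ℝ) (μ : Measure α) : Prop :=
  ∀ R, ∃ C, ∀ᵐ p ∂μ, ∀ u, |u| ≤ R → |F u p| ≤ C * g p

theorem abs_le_abs_add_one_of_mem_ball {u u₀ : ℝ} (hu : u ∈ Metric.ball u₀ 1) :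
    |u| ≤ |u₀| + 1 := by
  have := abs_sub_abs_le_abs_sub u u₀
  rw [Metric.mem_ball, Real.dist_eq] at hu
  linarith

namespace LocallyDominated

variable {F F' : ℝ → α → ℝ} {g : α → ℝ}

theorem integrable (hF : LocallyDominated F g μ) (hg : Integrable g μ) {u : ℝ}
    (hmeas : AEStronglyMeasurable (F u) μ) : Integrable (F u) μ := by
  obtain ⟨C, hC⟩ := hF |u|
  exact (hg.const_mul C).mono' hmeas (hC.mono fun p hp => hp u le_rfl)

theorem continuous (hF : LocallyDominated F g μ) (hg : Integrable g μ)
    (hmeas : ∀ u, AEStronglyMeasurable (F u) μ) (hcont : ∀ᵐ p ∂μ, Continuous (F · p)) :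
    Continuous fun u => ∫ p, F u p ∂μ := by
  refine continuous_iff_continuousAt.2 fun u₀ => ?_
  obtain ⟨C, hC⟩ := hF (|u₀| + 1)
  refine continuousAt_of_dominated (.of_forall hmeas) ?_ (hg.const_mul C)
    (hcont.mono fun p hp => hp.continuousAt)
  filter_upwards [Metric.ball_mem_nhds u₀ one_pos] with u hu
  exact hC.mono fun p hp => hp u (abs_le_abs_add_one_of_mem_ball hu)

theorem hasDerivAt (hF' : LocallyDominated F' g μ) (hg : Integrable g μ)
    (hF_meas : ∀ u, AEStronglyMeasurable (F u) μ) (hF_int : ∀ u, Integrable (F u) μ)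
    (hF'_meas : ∀ u, AEStronglyMeasurable (F' u) μ)
    (h_diff : ∀ᵐ p ∂μ, ∀ u, HasDerivAt (F · p) (F' u p) u) (u₀ : ℝ) :
    HasDerivAt (fun u => ∫ p, F u p ∂μ) (∫ p, F' u₀ p ∂μ) u₀ := by
  obtain ⟨C, hC⟩ := hF' (|u₀| + 1)
  refine (hasDerivAt_integral_of_dominated_loc_of_deriv_le (Metric.ball_mem_nhds u₀ one_pos)
    (.of_forall hF_meas) (hF_int u₀) (hF'_meas u₀) ?_ (hg.const_mul C)
    (h_diff.mono fun p hp u _ => hp u)).2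
  exact hC.mono fun p hp u hu => hp u (abs_le_abs_add_one_of_mem_ball hu)

end LocallyDominated

end LocallyDominated

section ExpQuot

noncomputable def expQuot (w k u : ℝ) : ℝ := w⁻¹ * (Real.exp (w * u * k) - 1)

variable {w k u R M : ℝ}

theorem abs_mul_mul_le_of_mem_Ioc (hw : w ∈ Ioc 0 1) (hu : |u| ≤ R) (hk : |k| ≤ M) :
    |w * u * k| ≤ R * M := by
  rw [abs_mul, abs_mul, abs_of_pos hw.1]
  have hR : 0 ≤ R := (abs_nonneg u).trans hu
  calc w * |u| * |k| ≤ 1 * R * M := by gcongr; exact hw.2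
    _ = R * M := by ring

theorem exp_mul_mul_le_of_mem_Ioc (hw : w ∈ Ioc 0 1) (hu : |u| ≤ R) (hk : |k| ≤ M) :
    Real.exp (w * u * k) ≤ Real.exp (R * M) :=
  Real.exp_le_exp.2 ((le_abs_self _).trans (abs_mul_mul_le_of_mem_Ioc hw hu hk))

theorem abs_expQuot_le (hw : w ∈ Ioc 0 1) (hu : |u| ≤ R) (hk : |k| ≤ M) :
    |expQuot w k u| ≤ R * Real.exp (R * M) * |k| := by
  have hw₀ : 0 < w := hw.1
  calc |expQuot w k u| = w⁻¹ * |Real.exp (w * u * k) - 1| := by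
        rw [expQuot, abs_mul, abs_inv, abs_of_pos hw₀]
    _ ≤ w⁻¹ * (|w * u * k| * Real.exp |w * u * k|) := by
        gcongr; exact Real.abs_exp_sub_one_le_abs_mul_exp_abs _
    _ = |u| * |k| * Real.exp |w * u * k| := by
        rw [abs_mul, abs_mul, abs_of_pos hw₀]; field_simp
    _ ≤ R * |k| * Real.exp (R * M) := by
        gcongr
        · exact mul_nonneg ((abs_nonneg u).trans hu) (abs_nonneg k)
        · exact abs_mul_mul_le_of_mem_Ioc hw hu hk
    _ = R * Real.exp (R * M) * |k| := by ring

theorem abs_mul_exp_le (hw : w ∈ Ioc 0 1) (hu : |u| ≤ R) (hk : |k| ≤ M) :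
    |k * Real.exp (w * u * k)| ≤ Real.exp (R * M) * |k| := by
  rw [abs_mul, Real.abs_exp, mul_comm]
  exact mul_le_mul_of_nonneg_right (exp_mul_mul_le_of_mem_Ioc hw hu hk) (abs_nonneg k)

theorem abs_mul_sq_mul_exp_le (hw : w ∈ Ioc 0 1) (hu : |u| ≤ R) (hk : |k| ≤ M) :
    |w * k ^ 2 * Real.exp (w * u * k)| ≤ M * Real.exp (R * M) * |k| := by
  rw [abs_mul, abs_mul, Real.abs_exp, abs_of_pos hw.1, abs_pow, sq]
  have hM : 0 ≤ M := (abs_nonneg k).trans hk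
  calc w * (|k| * |k|) * Real.exp (w * u * k) ≤ 1 * (M * |k|) * Real.exp (R * M) := by
        gcongr ?_ * (?_ * _) * ?_
        exacts [hw.2, exp_mul_mul_le_of_mem_Ioc hw hu hk]
    _ = M * Real.exp (R * M) * |k| := by ring

theorem hasDerivAt_expQuot (hw : w ≠ 0) (k u : ℝ) :
    HasDerivAt (expQuot w k) (k * Real.exp (w * u * k)) u := by
  have h := ((((hasDerivAt_id u).const_mul w).mul_const k).exp.sub_const 1).const_mul w⁻¹
  exact h.congr_deriv (by simp only [id]; field_simp)

theorem hasDerivAt_mul_exp (w k u : ℝ) :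
    HasDerivAt (fun u => k * Real.exp (w * u * k)) (w * k ^ 2 * Real.exp (w * u * k)) u := by
  have h := (((hasDerivAt_id u).const_mul w).mul_const k).exp.const_mul k
  exact h.congr_deriv (by simp only [id]; ring)

end ExpQuot

section ExpQuotIntegral

variable {α : Type*} [MeasurableSpace α] {μ : Measure α} {w k : α → ℝ} {M : ℝ}

theorem locallyDominated_expQuot (hw : ∀ᵐ p ∂μ, w p ∈ Ioc 0 1) (hk : ∀ᵐ p ∂μ, |k p| ≤ M) :
    LocallyDominated (fun u p => expQuot (w p) (k p) u) (fun p => |k p|) μ := fun R =>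
  ⟨R * Real.exp (R * M), by
    filter_upwards [hw, hk] with p hwp hkp u hu using abs_expQuot_le hwp hu hkp⟩

theorem locallyDominated_mul_exp (hw : ∀ᵐ p ∂μ, w p ∈ Ioc 0 1) (hk : ∀ᵐ p ∂μ, |k p| ≤ M) :
    LocallyDominated (fun u p => k p * Real.exp (w p * u * k p)) (fun p => |k p|) μ := fun R =>
  ⟨Real.exp (R * M), by
    filter_upwards [hw, hk] with p hwp hkp u hu using abs_mul_exp_le hwp hu hkp⟩

theorem locallyDominated_mul_sq_mul_exp (hw : ∀ᵐ p ∂μ, w p ∈ Ioc 0 1)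
    (hk : ∀ᵐ p ∂μ, |k p| ≤ M) :
    LocallyDominated (fun u p => w p * k p ^ 2 * Real.exp (w p * u * k p)) (fun p => |k p|) μ :=
  fun R => ⟨M * Real.exp (R * M), by
    filter_upwards [hw, hk] with p hwp hkp u hu using abs_mul_sq_mul_exp_le hwp hu hkp⟩

theorem integrable_expQuot (hw_meas : AEStronglyMeasurable w μ) (hw : ∀ᵐ p ∂μ, w p ∈ Ioc 0 1)
    (hk : Integrable k μ) (hkM : ∀ᵐ p ∂μ, |k p| ≤ M) (u : ℝ) :
    Integrable (fun p => expQuot (w p) (k p) u) μ :=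
  (locallyDominated_expQuot hw hkM).integrable hk.abs
    (by have := hk.aestronglyMeasurable; unfold expQuot; fun_prop)

theorem hasDerivAt_integral_expQuot (hw_meas : AEStronglyMeasurable w μ)
    (hw : ∀ᵐ p ∂μ, w p ∈ Ioc 0 1) (hk : Integrable k μ) (hkM : ∀ᵐ p ∂μ, |k p| ≤ M) (u : ℝ) :
    HasDerivAt (fun u => ∫ p, expQuot (w p) (k p) u ∂μ)
      (∫ p, k p * Real.exp (w p * u * k p) ∂μ) u :=
  have := hk.aestronglyMeasurable
  (locallyDominated_mul_exp hw hkM).hasDerivAt hk.abs (by unfold expQuot; fun_prop)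
    (integrable_expQuot hw_meas hw hk hkM) (by fun_prop)
    (hw.mono fun p hp u => hasDerivAt_expQuot hp.1.ne' (k p) u) u

theorem hasDerivAt_integral_mul_exp (hw_meas : AEStronglyMeasurable w μ)
    (hw : ∀ᵐ p ∂μ, w p ∈ Ioc 0 1) (hk : Integrable k μ) (hkM : ∀ᵐ p ∂μ, |k p| ≤ M) (u : ℝ) :
    HasDerivAt (fun u => ∫ p, k p * Real.exp (w p * u * k p) ∂μ)
      (∫ p, w p * k p ^ 2 * Real.exp (w p * u * k p) ∂μ) u :=
  have := hk.aestronglyMeasurable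
  (locallyDominated_mul_sq_mul_exp hw hkM).hasDerivAt hk.abs (by fun_prop)
    (fun _ => (locallyDominated_mul_exp hw hkM).integrable hk.abs (by fun_prop)) (by fun_prop)
    (.of_forall fun p u => hasDerivAt_mul_exp (w p) (k p) u) u

theorem continuous_integral_mul_sq_mul_exp (hw_meas : AEStronglyMeasurable w μ)
    (hw : ∀ᵐ p ∂μ, w p ∈ Ioc 0 1) (hk : Integrable k μ) (hkM : ∀ᵐ p ∂μ, |k p| ≤ M) :
    Continuous fun u => ∫ p, w p * k p ^ 2 * Real.exp (w p * u * k p) ∂μ :=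
  have := hk.aestronglyMeasurable
  (locallyDominated_mul_sq_mul_exp hw hkM).continuous hk.abs (by fun_prop)
    (.of_forall fun _ => by fun_prop)

theorem integral_mul_sq_mul_exp_pos (hw_meas : AEStronglyMeasurable w μ)
    (hw : ∀ᵐ p ∂μ, w p ∈ Ioc 0 1) (hk : Integrable k μ) (hkM : ∀ᵐ p ∂μ, |k p| ≤ M)
    (hk₀ : 0 < μ {p | k p ≠ 0}) (u : ℝ) :
    0 < ∫ p, w p * k p ^ 2 * Real.exp (w p * u * k p) ∂μ := by
  have := hk.aestronglyMeasurable
  refine (integral_pos_iff_support_of_nonneg_ae ?_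
    ((locallyDominated_mul_sq_mul_exp hw hkM).integrable hk.abs (by fun_prop))).2
    (hk₀.trans_le (measure_mono_ae ?_))
  · filter_upwards [hw] with p hp
    have := hp.1
    positivity
  · filter_upwards [hw] with p hp hkp
    exact (mul_pos (mul_pos hp.1 (sq_pos_of_ne_zero hkp)) (Real.exp_pos _)).ne'

theorem contDiff_two_integral_expQuot (hw_meas : AEStronglyMeasurable w μ)
    (hw : ∀ᵐ p ∂μ, w p ∈ Ioc 0 1) (hk : Integrable k μ) (hkM : ∀ᵐ p ∂μ, |k p| ≤ M) :
    ContDiff ℝ 2 fun u => ∫ p, expQuot (w p) (k p) u ∂μ :=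
  contDiff_two_of_hasDerivAt (hasDerivAt_integral_expQuot hw_meas hw hk hkM)
    (hasDerivAt_integral_mul_exp hw_meas hw hk hkM)
    (continuous_integral_mul_sq_mul_exp hw_meas hw hk hkM)

theorem strictConvexOn_integral_expQuot (hw_meas : AEStronglyMeasurable w μ)
    (hw : ∀ᵐ p ∂μ, w p ∈ Ioc 0 1) (hk : Integrable k μ) (hkM : ∀ᵐ p ∂μ, |k p| ≤ M)
    (hk₀ : 0 < μ {p | k p ≠ 0}) :
    StrictConvexOn ℝ univ fun u => ∫ p, expQuot (w p) (k p) u ∂μ :=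
  strictConvexOn_univ_of_hasDerivAt_of_pos (hasDerivAt_integral_expQuot hw_meas hw hk hkM)
    (hasDerivAt_integral_mul_exp hw_meas hw hk hkM)
    (integral_mul_sq_mul_exp_pos hw_meas hw hk hkM hk₀)

end ExpQuotIntegral

theorem mul_lt_one_of_lt_one_div {a x : ℝ} (hx : 0 ≤ x) (h : a < 1 / x) : a * x < 1 := by
  rcases hx.eq_or_lt with rfl | hx
  · simp
  · exact (lt_div_iff₀ hx).1 h

theorem rpow_mem_Ioc_zero_one {s b : ℝ} (hs : s ∈ Ioc 0 1) (hb : 0 ≤ b) : s ^ b ∈ Ioc 0 1 :=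
  ⟨Real.rpow_pos_of_pos hs.1 b, Real.rpow_le_one hs.1.le hs.2 hb⟩

theorem rpow_neg_mul_exp_sub_one_eq_expQuot {s : ℝ} (hs : 0 ≤ s) (b u x c : ℝ) :
    s ^ (-b) * (Real.exp (s ^ b * u * x / c) - 1) = expQuot (s ^ b) (x / c) u := by
  rw [Real.rpow_neg hs, expQuot, mul_div_assoc]

theorem measure_setOf_ne_zero_pos_of_integral_ne_zero {α : Type*} [MeasurableSpace α]
    {μ : Measure α} {f : α → ℝ} (h : ∫ a, f a ∂μ ≠ 0) : 0 < μ {a | f a ≠ 0} :=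
  pos_iff_ne_zero.2 (frequently_ae_iff.1 (frequently_ae_ne_zero_of_integral_ne_zero h))

section UnitIntervalProd

variable {β : Type*} [MeasurableSpace β] (ν : Measure β)

theorem ae_fst_mem_Ioc_zero_one :
    ∀ᵐ p ∂((volume.restrict (Ioc (0:ℝ) 1)).prod ν), p.1 ∈ Ioc (0:ℝ) 1 :=
  Measure.quasiMeasurePreserving_fst.ae (ae_restrict_mem measurableSet_Ioc)

/-- `Real.rpow_neg` needs a nonnegative base, so this identification only holds almost
everywhere. -/
theorem rpow_neg_mul_exp_sub_one_ae_eq_expQuot (k : β → ℝ) (b u c : ℝ) :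
    (fun p : ℝ × β => p.1 ^ (-b) * (Real.exp (p.1 ^ b * u * k p.2 / c) - 1))
      =ᵐ[(volume.restrict (Ioc (0:ℝ) 1)).prod ν] fun p => expQuot (p.1 ^ b) (k p.2 / c) u :=
  (ae_fst_mem_Ioc_zero_one ν).mono fun p hp =>
    rpow_neg_mul_exp_sub_one_eq_expQuot hp.1.le b u (k p.2) c

theorem measure_setOf_div_ne_zero_pos [SFinite ν] {k : β → ℝ} (hk : ∫ z, k z ∂ν ≠ 0) {c : ℝ}
    (hc : c ≠ 0) :
    0 < (volume.restrict (Ioc (0:ℝ) 1)).prod ν {p | k p.2 / c ≠ 0} := by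
  have hset : {p : ℝ × β | k p.2 / c ≠ 0} = univ ×ˢ {z | k z ≠ 0} := by
    ext p
    simp [hc]
  rw [hset, Measure.prod_prod]
  simpa using measure_setOf_ne_zero_pos_of_integral_ne_zero hk

end UnitIntervalProd

theorem psi_zero (d : ℕ) (a : ℝ) (K : (Fin d → ℝ) → ℝ) : psi d a K 0 = 0 := by
  simp [psi]

theorem stmt0_general (d : ℕ) (a : ℝ) (ha : 0 < a) (had : a < 1 / d)
    (K : (Fin d → ℝ) → ℝ)
    (hKbdd : ∃ M, ∀ z, |K z| ≤ M) (hKint : Integrable K)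
    (hKone : (∫ z, K z) = 1) :
    (∀ u : ℝ, Integrable
        (fun p : ℝ × (Fin d → ℝ) =>
          p.1 ^ (-(a * d)) * (Real.exp (p.1 ^ (a * d) * u * K p.2 / (1 - a * d)) - 1))
        ((volume.restrict (Ioc (0:ℝ) 1)).prod volume)) ∧
    StrictConvexOn ℝ Set.univ (psi d a K) ∧
    ContDiff ℝ 2 (psi d a K) ∧
    (∀ t : ℝ, (0 : EReal) ≤ Itrans d a K t) ∧
    (∀ c : ℝ, IsCompact {t : ℝ | Itrans d a K t ≤ (c : EReal)}) := by
  obtain ⟨M, hM⟩ := hKbdd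
  set b : ℝ := a * d
  have hb₀ : 0 ≤ b := by positivity
  have hb₁ : 1 - b ≠ 0 := (sub_pos.2 (mul_lt_one_of_lt_one_div d.cast_nonneg had)).ne'
  set μ : Measure (ℝ × (Fin d → ℝ)) := (volume.restrict (Ioc (0:ℝ) 1)).prod volume
  have hw_meas : AEStronglyMeasurable (fun p : ℝ × (Fin d → ℝ) => p.1 ^ b) μ := by fun_prop
  have hw : ∀ᵐ p ∂μ, p.1 ^ b ∈ Ioc 0 1 :=
    (ae_fst_mem_Ioc_zero_one _).mono fun p hp => rpow_mem_Ioc_zero_one hp hb₀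
  have hk : Integrable (fun p : ℝ × (Fin d → ℝ) => K p.2 / (1 - b)) μ :=
    (hKint.comp_snd _).div_const _
  have hkM : ∀ᵐ p ∂μ, |K p.2 / (1 - b)| ≤ M / |1 - b| :=
    .of_forall fun p => by rw [abs_div]; gcongr; exact hM p.2
  have hk₀ : 0 < μ {p | K p.2 / (1 - b) ≠ 0} :=
    measure_setOf_div_ne_zero_pos _ (hKone ▸ one_ne_zero) hb₁
  have hF := fun u => rpow_neg_mul_exp_sub_one_ae_eq_expQuot volume K b u (1 - b)
  have hInt : ∀ u : ℝ, Integrable (fun p : ℝ × (Fin d → ℝ) =>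
      p.1 ^ (-b) * (Real.exp (p.1 ^ b * u * K p.2 / (1 - b)) - 1)) μ := fun u =>
    (integrable_expQuot hw_meas hw hk hkM u).congr (hF u).symm
  have hψ : psi d a K = fun u => ∫ p, expQuot (p.1 ^ b) (K p.2 / (1 - b)) u ∂μ :=
    funext fun u => (integral_integral (hInt u)).trans (integral_congr_ae (hF u))
  exact ⟨hInt, hψ ▸ strictConvexOn_integral_expQuot hw_meas hw hk hkM hk₀,
    hψ ▸ contDiff_two_integral_expQuot hw_meas hw hk hkM,
    legendreTransform_nonneg (psi_zero d a K), isCompact_legendreTransform_sublevel (psi d a K)⟩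

/-- Proposition 1 (i): under (H1) with `0 < a < 1/d`, the integral defining `ψ` converges
absolutely for every `u`, `ψ` is strictly convex and twice continuously differentiable on `ℝ`,
and its Fenchel–Legendre transform `I` is a good rate function on `ℝ` (nonnegative, with
compact level sets). -/
theorem stmt0 (d : ℕ) (hd : 0 < d) (a : ℝ) (ha : 0 < a) (had : a < 1 / d)
    (K : (Fin d → ℝ) → ℝ)
    (hKbdd : ∃ M, ∀ z, |K z| ≤ M) (hKint : Integrable K)
    (hKone : (∫ z, K z) = 1)
    (hKvanish : Tendsto K (cocompact (Fin d → ℝ)) (𝓝 0)) :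
    (∀ u : ℝ, Integrable
        (fun p : ℝ × (Fin d → ℝ) =>
          p.1 ^ (-(a * d)) * (Real.exp (p.1 ^ (a * d) * u * K p.2 / (1 - a * d)) - 1))
        ((volume.restrict (Ioc (0:ℝ) 1)).prod volume)) ∧
    StrictConvexOn ℝ Set.univ (psi d a K) ∧
    ContDiff ℝ 2 (psi d a K) ∧
    (∀ t : ℝ, (0 : EReal) ≤ Itrans d a K t) ∧
    (∀ c : ℝ, IsCompact {t : ℝ | Itrans d a K t ≤ (c : EReal)}) :=
  stmt0_general d a ha had K hKbdd hKint hKone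
end

section
/- Under (H1) with 0<a<1/d, the function I attains its strict global minimum at the point t = 1/(1−ad), and I(1/(1−ad)) = 0; that is, I(1/(1−ad))=0 and I(t)>0 for every t ≠ 1/(1−ad). -/
open MeasureTheory Filter Set
open scoped Topology ENNReal NNReal BigOperators

/-! Since `e^x - 1 ≥ x` and `∫ K = 1`, `ψ(u) ≥ u/(1-ad)` for every `u`, so
`I(1/(1-ad)) ≤ 0`, with equality at `u = 0`. Conversely `e^x - 1 ≤ x + x²` for `|x| ≤ 1` gives
`ψ(u) ≤ u/(1-ad) + C u²` for small `u`, so for `t ≠ 1/(1-ad)` a small `u` of the sign of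
`t - 1/(1-ad)` makes `u t - ψ(u)` positive. Both bounds need `ψ` to be a genuine integral
rather than Lean's junk value `0`: by `|e^x - 1| ≤ |x| e^{|x|}` the integrand is dominated on
`(0,1] × ℝ^d` by a multiple of `|K(z)|`. -/

open Real

lemma abs_exp_sub_one_le_mul_exp_abs (x : ℝ) : |exp x - 1| ≤ |x| * exp |x| := by
  rcases le_or_gt 0 x with hx | hx
  · have h1 : (1 - x) * exp x ≤ 1 := by
      calc (1 - x) * exp x ≤ exp (-x) * exp x := by gcongr; exact one_sub_le_exp_neg x
        _ = 1 := by rw [← exp_add, neg_add_cancel, exp_zero]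
    rw [abs_of_nonneg (by linarith [one_le_exp hx]), abs_of_nonneg hx]
    linarith
  · rw [abs_of_nonpos (by linarith [exp_lt_one_iff.mpr hx]), abs_of_neg hx]
    nlinarith [add_one_le_exp x, one_le_exp (neg_nonneg.mpr hx.le)]

section Integrand

variable {α : Type*} {K : α → ℝ} {c u M s : ℝ} {z : α}

noncomputable def psiIntegrand (c : ℝ) (K : α → ℝ) (u s : ℝ) (z : α) : ℝ :=
  s ^ (-c) * (exp (s ^ c * u * K z / (1 - c)) - 1)

lemma psi_eq_integral_psiIntegrand (d : ℕ) (a : ℝ) (K : (Fin d → ℝ) → ℝ) (u : ℝ) :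
    psi d a K u = ∫ s in Ioc (0 : ℝ) 1, ∫ z, psiIntegrand (a * d) K u s z :=
  rfl

lemma rpow_neg_mul_rpow_mul (hs : 0 < s) (w : ℝ) : s ^ (-c) * (s ^ c * w) = w := by
  rw [← mul_assoc, ← rpow_add hs, neg_add_cancel, rpow_zero, one_mul]

lemma psiIntegrand_eq :
    psiIntegrand c K u s z = s ^ (-c) * (exp (s ^ c * (u * K z / (1 - c))) - 1) := by
  rw [psiIntegrand]
  congr 3
  ring

lemma abs_rpow_mul_le (hc0 : 0 ≤ c) (hs : s ∈ Ioc (0 : ℝ) 1) (w : ℝ) :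
    |s ^ c * w| ≤ |w| := by
  rw [abs_mul, abs_of_pos (rpow_pos_of_pos hs.1 c)]
  exact mul_le_of_le_one_left (abs_nonneg w) (rpow_le_one hs.1.le hs.2 hc0)

lemma mul_div_le_psiIntegrand (hs : 0 < s) : u * K z / (1 - c) ≤ psiIntegrand c K u s z := by
  rw [psiIntegrand_eq]
  set w := u * K z / (1 - c)
  calc w = s ^ (-c) * (s ^ c * w) := (rpow_neg_mul_rpow_mul hs w).symm
    _ ≤ s ^ (-c) * (exp (s ^ c * w) - 1) := by
        gcongr
        linarith [add_one_le_exp (s ^ c * w)]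

lemma abs_psiIntegrand_le (hc0 : 0 ≤ c) (hc1 : c < 1) (hs : s ∈ Ioc (0 : ℝ) 1)
    (hM : |K z| ≤ M) :
    |psiIntegrand c K u s z| ≤ |u| / (1 - c) * exp (|u| * M / (1 - c)) * |K z| := by
  have h1c : 0 < 1 - c := by linarith
  have hs0 : 0 < s := hs.1
  rw [psiIntegrand_eq]
  set w := u * K z / (1 - c)
  have hw : |w| = |u| / (1 - c) * |K z| := by
    rw [abs_div, abs_mul, abs_of_pos h1c]; ring
  have hwM : |w| ≤ |u| * M / (1 - c) := by
    rw [hw, div_mul_eq_mul_div]; gcongr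
  have hx := abs_rpow_mul_le hc0 hs w
  calc |s ^ (-c) * (exp (s ^ c * w) - 1)|
      = s ^ (-c) * |exp (s ^ c * w) - 1| := by
        rw [abs_mul, abs_of_pos (rpow_pos_of_pos hs0 _)]
    _ ≤ s ^ (-c) * (|s ^ c * w| * exp |s ^ c * w|) := by
        gcongr; exact abs_exp_sub_one_le_mul_exp_abs _
    _ = |w| * exp |s ^ c * w| := by
        rw [abs_mul, abs_of_pos (rpow_pos_of_pos hs0 c), ← mul_assoc,
          rpow_neg_mul_rpow_mul hs0]
    _ ≤ |w| * exp (|u| * M / (1 - c)) := by gcongr; exact hx.trans hwM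
    _ = |u| / (1 - c) * exp (|u| * M / (1 - c)) * |K z| := by rw [hw]; ring

lemma psiIntegrand_le (hc0 : 0 ≤ c) (hc1 : c < 1) (hs : s ∈ Ioc (0 : ℝ) 1)
    (hM : |K z| ≤ M) (hu : |u| * M ≤ 1 - c) :
    psiIntegrand c K u s z ≤ u * K z / (1 - c) + u ^ 2 * M / (1 - c) ^ 2 * |K z| := by
  have h1c : 0 < 1 - c := by linarith
  have hs0 : 0 < s := hs.1
  rw [psiIntegrand_eq]
  set w := u * K z / (1 - c) with hw_def
  have hw2 : w ^ 2 ≤ u ^ 2 * M / (1 - c) ^ 2 * |K z| := by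
    have hK2 : K z ^ 2 ≤ M * |K z| := by
      rw [← sq_abs, sq]; gcongr
    calc w ^ 2 = u ^ 2 / (1 - c) ^ 2 * K z ^ 2 := by rw [hw_def, div_pow, mul_pow]; ring
      _ ≤ u ^ 2 / (1 - c) ^ 2 * (M * |K z|) := by gcongr
      _ = u ^ 2 * M / (1 - c) ^ 2 * |K z| := by ring
  have hx : |s ^ c * w| ≤ 1 := by
    refine (abs_rpow_mul_le hc0 hs w).trans ?_
    rw [abs_div, abs_mul, abs_of_pos h1c, div_le_one h1c]
    calc |u| * |K z| ≤ |u| * M := by gcongr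
      _ ≤ 1 - c := hu
  have hsc : s ^ c * w ^ 2 ≤ w ^ 2 :=
    mul_le_of_le_one_left (sq_nonneg w) (rpow_le_one hs.1.le hs.2 hc0)
  calc s ^ (-c) * (exp (s ^ c * w) - 1)
      ≤ s ^ (-c) * (s ^ c * w + (s ^ c * w) ^ 2) := by
        gcongr
        linarith [(abs_le.mp (abs_exp_sub_one_sub_id_le hx)).2]
    _ = w + s ^ c * w ^ 2 := by
        rw [mul_add, rpow_neg_mul_rpow_mul hs0,
          show (s ^ c * w) ^ 2 = s ^ c * (s ^ c * w ^ 2) by ring, rpow_neg_mul_rpow_mul hs0]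
    _ ≤ w + u ^ 2 * M / (1 - c) ^ 2 * |K z| := by linarith

end Integrand

section Integral

variable {α β : Type*} [MeasurableSpace α] [MeasurableSpace β] {μ : Measure α} [SFinite μ]
  {K : α → ℝ} {c u M : ℝ}

omit [SFinite μ] in
lemma ae_fst_mem_of_restrict (ν : Measure β) {S : Set β} (hS : MeasurableSet S) :
    ∀ᵐ p ∂((ν.restrict S).prod μ), p.1 ∈ S :=
  Measure.quasiMeasurePreserving_fst.ae (ae_restrict_mem hS)

lemma integral_comp_snd_restrict_Ioc (f : α → ℝ) :
    ∫ p, f p.2 ∂((volume.restrict (Ioc (0 : ℝ) 1)).prod μ) = ∫ z, f z ∂μ := by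
  rw [integral_fun_snd]
  simp [Measure.real]

lemma integrable_psiIntegrand (hc0 : 0 ≤ c) (hc1 : c < 1) (hM : ∀ z, |K z| ≤ M)
    (hK : Integrable K μ) (u : ℝ) :
    Integrable (fun p : ℝ × α => psiIntegrand c K u p.1 p.2)
      ((volume.restrict (Ioc (0 : ℝ) 1)).prod μ) := by
  have hmeas : Measurable fun q : ℝ × ℝ =>
      q.1 ^ (-c) * (exp (q.1 ^ c * u * q.2 / (1 - c)) - 1) := by
    fun_prop
  refine Integrable.mono'
    ((hK.abs.const_mul (|u| / (1 - c) * exp (|u| * M / (1 - c)))).comp_snd _)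
    (hmeas.comp_aemeasurable (measurable_fst.aemeasurable.prodMk
      hK.aestronglyMeasurable.comp_snd.aemeasurable)).aestronglyMeasurable ?_
  filter_upwards [ae_fst_mem_of_restrict volume measurableSet_Ioc] with p hp
  exact abs_psiIntegrand_le hc0 hc1 hp (hM p.2)

lemma integral_integral_psiIntegrand_eq (hc0 : 0 ≤ c) (hc1 : c < 1) (hM : ∀ z, |K z| ≤ M)
    (hK : Integrable K μ) (u : ℝ) :
    ∫ s in Ioc (0 : ℝ) 1, ∫ z, psiIntegrand c K u s z ∂μ
      = ∫ p, psiIntegrand c K u p.1 p.2 ∂((volume.restrict (Ioc (0 : ℝ) 1)).prod μ) :=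
  (integral_prod _ (integrable_psiIntegrand hc0 hc1 hM hK u)).symm

lemma div_le_integral_integral_psiIntegrand (hc0 : 0 ≤ c) (hc1 : c < 1) (hM : ∀ z, |K z| ≤ M)
    (hK : Integrable K μ) (hK1 : ∫ z, K z ∂μ = 1) (u : ℝ) :
    u / (1 - c) ≤ ∫ s in Ioc (0 : ℝ) 1, ∫ z, psiIntegrand c K u s z ∂μ := by
  rw [integral_integral_psiIntegrand_eq hc0 hc1 hM hK]
  calc u / (1 - c)
      = ∫ p, u * K p.2 / (1 - c) ∂((volume.restrict (Ioc (0 : ℝ) 1)).prod μ) := by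
        rw [integral_comp_snd_restrict_Ioc (fun z => u * K z / (1 - c)), integral_div,
          integral_const_mul, hK1, mul_one]
    _ ≤ _ := by
        refine integral_mono_ae (((hK.const_mul u).div_const _).comp_snd _)
          (integrable_psiIntegrand hc0 hc1 hM hK u) ?_
        filter_upwards [ae_fst_mem_of_restrict volume measurableSet_Ioc] with p hp
        exact mul_div_le_psiIntegrand hp.1

lemma integral_integral_psiIntegrand_le (hc0 : 0 ≤ c) (hc1 : c < 1) (hM : ∀ z, |K z| ≤ M)
    (hK : Integrable K μ) (hK1 : ∫ z, K z ∂μ = 1) (hu : |u| * M ≤ 1 - c) :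
    ∫ s in Ioc (0 : ℝ) 1, ∫ z, psiIntegrand c K u s z ∂μ
      ≤ u / (1 - c) + M / (1 - c) ^ 2 * (∫ z, |K z| ∂μ) * u ^ 2 := by
  rw [integral_integral_psiIntegrand_eq hc0 hc1 hM hK]
  have hbound : Integrable (fun z => u * K z / (1 - c) + u ^ 2 * M / (1 - c) ^ 2 * |K z|) μ :=
    ((hK.const_mul u).div_const _).add (hK.abs.const_mul _)
  calc _ ≤ ∫ p, u * K p.2 / (1 - c) + u ^ 2 * M / (1 - c) ^ 2 * |K p.2|
          ∂((volume.restrict (Ioc (0 : ℝ) 1)).prod μ) := by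
        refine integral_mono_ae (integrable_psiIntegrand hc0 hc1 hM hK u) (hbound.comp_snd _) ?_
        filter_upwards [ae_fst_mem_of_restrict volume measurableSet_Ioc] with p hp
        exact psiIntegrand_le hc0 hc1 hp (hM p.2) hu
    _ = u / (1 - c) + M / (1 - c) ^ 2 * (∫ z, |K z| ∂μ) * u ^ 2 := by
        rw [integral_comp_snd_restrict_Ioc
            (fun z => u * K z / (1 - c) + u ^ 2 * M / (1 - c) ^ 2 * |K z|),
          integral_add ((hK.const_mul u).div_const _) (hK.abs.const_mul _), integral_div,
          integral_const_mul, integral_const_mul, hK1]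
        ring

end Integral

lemma iSup_mul_sub_eq_zero {ψ : ℝ → ℝ} {t : ℝ} (h0 : ψ 0 = 0)
    (hψ : ∀ u, u * t ≤ ψ u) :
    ⨆ u : ℝ, ((u * t - ψ u : ℝ) : EReal) = 0 :=
  le_antisymm (iSup_le fun u => EReal.coe_nonpos.mpr (by linarith [hψ u]))
    (le_iSup_of_le 0 (by simp [h0]))

lemma exists_abs_le_mul_sq_lt_mul (C : ℝ) {δ ε : ℝ} (hδ : 0 < δ) (hε : ε ≠ 0) :
    ∃ u, |u| ≤ δ ∧ C * u ^ 2 < u * ε := by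
  have hε' : 0 < |ε| := abs_pos.mpr hε
  set η := min (δ / |ε|) (1 / (2 * (|C| + 1)))
  have hη : 0 < η := lt_min (by positivity) (by positivity)
  have hCη : |C| * η < 1 := by
    calc |C| * η ≤ |C| * (1 / (2 * (|C| + 1))) := by gcongr; exact min_le_right _ _
      _ < 1 := by rw [mul_one_div, div_lt_one (by positivity)]; linarith [abs_nonneg C]
  refine ⟨η * ε, ?_, ?_⟩
  · rw [abs_mul, abs_of_pos hη, ← le_div_iff₀ hε']
    exact min_le_left _ _
  · have hηε : 0 < η * ε ^ 2 := by positivity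
    calc C * (η * ε) ^ 2 ≤ |C| * η * (η * ε ^ 2) := by
          rw [mul_assoc, show η * (η * ε ^ 2) = (η * ε) ^ 2 by ring]
          exact mul_le_mul_of_nonneg_right (le_abs_self C) (sq_nonneg _)
      _ < η * ε ^ 2 := mul_lt_of_lt_one_left hηε hCη
      _ = η * ε * ε := by ring

lemma zero_lt_iSup_mul_sub {ψ : ℝ → ℝ} {t₀ t C δ : ℝ} (hδ : 0 < δ)
    (hψ : ∀ u, |u| ≤ δ → ψ u ≤ u * t₀ + C * u ^ 2) (ht : t ≠ t₀) :
    0 < ⨆ u : ℝ, ((u * t - ψ u : ℝ) : EReal) := by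
  obtain ⟨u, hu, hlt⟩ := exists_abs_le_mul_sq_lt_mul C hδ (sub_ne_zero.mpr ht)
  have hψu := hψ u hu
  exact (EReal.coe_pos.mpr (by nlinarith)).trans_le
    (le_iSup (fun v : ℝ => ((v * t - ψ v : ℝ) : EReal)) u)

theorem stmt3_general (d : ℕ) (a : ℝ) (ha : 0 < a) (had : a < 1 / d)
    (K : (Fin d → ℝ) → ℝ)
    (hKbdd : ∃ M, ∀ z, |K z| ≤ M) (hKint : Integrable K)
    (hKone : (∫ z, K z) = 1) :
    Itrans d a K (1 / (1 - a * d)) = 0 ∧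
    ∀ t : ℝ, t ≠ 1 / (1 - a * d) → 0 < Itrans d a K t := by
  obtain ⟨M, hM⟩ := hKbdd
  have hd : (0 : ℝ) < d := Nat.cast_pos.mpr <| Nat.pos_of_ne_zero fun h => by
    simp only [h, CharP.cast_eq_zero, div_zero] at had
    linarith
  have hc0 : 0 ≤ a * d := by positivity
  have hc1 : a * d < 1 := by rwa [lt_div_iff₀ hd] at had
  have h1c : 0 < 1 - a * d := by linarith
  have hM0 : 0 ≤ M := (abs_nonneg _).trans (hM 0)
  refine ⟨iSup_mul_sub_eq_zero (by simp [psi]) fun u => ?_, fun t ht => ?_⟩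
  · rw [mul_one_div, psi_eq_integral_psiIntegrand]
    exact div_le_integral_integral_psiIntegrand hc0 hc1 hM hKint hKone u
  refine zero_lt_iSup_mul_sub (C := M / (1 - a * d) ^ 2 * (∫ z, |K z|))
    (δ := (1 - a * d) / (M + 1)) (by positivity) (fun u hu => ?_) ht
  have huM : |u| * M ≤ 1 - a * d := by
    rw [le_div_iff₀ (by linarith)] at hu
    nlinarith [abs_nonneg u]
  rw [mul_one_div, psi_eq_integral_psiIntegrand]
  exact integral_integral_psiIntegrand_le hc0 hc1 hM hKint hKone huM

/-- Proposition 1 (iv): under (H1) with `0 < a < 1/d`, the rate function `I` attains its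
strict global minimum at `t = 1/(1-ad)`, with `I(1/(1-ad)) = 0` and `I(t) > 0` for every
`t ≠ 1/(1-ad)`. -/
theorem stmt3 (d : ℕ) (hd : 0 < d) (a : ℝ) (ha : 0 < a) (had : a < 1 / d)
    (K : (Fin d → ℝ) → ℝ)
    (hKbdd : ∃ M, ∀ z, |K z| ≤ M) (hKint : Integrable K)
    (hKone : (∫ z, K z) = 1)
    (hKvanish : Tendsto K (cocompact (Fin d → ℝ)) (𝓝 0)) :
    Itrans d a K (1 / (1 - a * d)) = 0 ∧
    ∀ t : ℝ, t ≠ 1 / (1 - a * d) → 0 < Itrans d a K t :=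
  stmt3_general d a ha had K hKbdd hKint hKone
end
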